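/- arXiv:2210.14347 — 5 statements merged into one kernel-verified Lean document; each statement's English description precedes it below -/
import Mathlib

section
/- For β = π_0 π_1 Σ_Z^{-1}(α_1 − α_0), it holds that β^⊤ Σ_Z β = (π_0 π_1)² (α_1 − α_0)^⊤ Σ_Z^{-1}(α_1 − α_0) ≤ π_0 π_1 ≤ 1/4. -/
/-!
Put `c = π₀π₁`, `d = α₁ - α₀` and `u = Σ_Z⁻¹ d`, so that `β = c u` and `βᵀ Σ_Z β = c² dᵀu`.
Expanding `Σ_Z u = d` against `u` gives `t = uᵀ Σ_{Z|Y} u + c t²` for `t = dᵀu`, hence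
`ct (1 - ct) = c · uᵀ Σ_{Z|Y} u ≥ 0`, which forces `0 ≤ ct ≤ 1` and so `βᵀ Σ_Z β = c · ct ≤ c`.
Finally `π₀π₁ ≤ ((π₀ + π₁)/2)² = 1/4`.
-/

open Matrix

namespace Matrix

variable {n α : Type*} [Fintype n]

lemma smul_dotProduct_mulVec_smul_of_mulVec_eq [CommRing α] {A : Matrix n n α} {u v : n → α}
    (hu : A *ᵥ u = v) (c : α) : (c • u) ⬝ᵥ (A *ᵥ (c • u)) = c ^ 2 * (v ⬝ᵥ u) := by
  rw [mulVec_smul, hu, smul_dotProduct, dotProduct_smul, dotProduct_comm, smul_eq_mul,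
    smul_eq_mul, sq, mul_assoc]

lemma dotProduct_eq_of_add_smul_vecMulVec_mulVec_eq [CommRing α] {S : Matrix n n α} {c : α}
    {d u : n → α} (hu : (S + c • vecMulVec d d) *ᵥ u = d) :
    d ⬝ᵥ u = u ⬝ᵥ (S *ᵥ u) + c * (d ⬝ᵥ u) ^ 2 := by
  conv_lhs => rw [← hu]
  rw [add_mulVec, smul_mulVec, vecMulVec_mulVec, add_dotProduct, dotProduct_comm (S *ᵥ u)]
  simp only [smul_dotProduct, op_smul_eq_smul, smul_eq_mul]
  ring

lemma PosSemidef.mul_dotProduct_le_one_of_add_smul_vecMulVec_mulVec_eq {S : Matrix n n ℝ}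
    (hS : S.PosSemidef) {c : ℝ} (hc : 0 ≤ c) {d u : n → ℝ}
    (hu : (S + c • vecMulVec d d) *ᵥ u = d) : c * (d ⬝ᵥ u) ≤ 1 := by
  have hq : 0 ≤ u ⬝ᵥ (S *ᵥ u) := by simpa using hS.dotProduct_mulVec_nonneg u
  have ht := dotProduct_eq_of_add_smul_vecMulVec_mulVec_eq hu
  -- `x (1 - x) ≥ 0` for `x = c t` pins `x` to `[0, 1]`.
  have hx : 0 ≤ c * (d ⬝ᵥ u) * (1 - c * (d ⬝ᵥ u)) := by
    have : c * (d ⬝ᵥ u) * (1 - c * (d ⬝ᵥ u)) = c * (u ⬝ᵥ (S *ᵥ u)) := by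
      linear_combination c * ht
    rw [this]
    positivity
  nlinarith

lemma PosDef.add_smul_vecMulVec_self {S : Matrix n n ℝ} (hS : S.PosDef) {c : ℝ} (hc : 0 ≤ c)
    (d : n → ℝ) : (S + c • vecMulVec d d).PosDef :=
  hS.add_posSemidef (by simpa using (posSemidef_vecMulVec_self_star d).smul hc)

end Matrix

/-- For `β = π_0 π_1 Σ_Z⁻¹(α_1-α_0)`, it holds that
`βᵀ Σ_Z β = (π_0π_1)² (α_1-α_0)ᵀ Σ_Z⁻¹ (α_1-α_0) ≤ π_0 π_1 ≤ 1/4`. -/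
theorem beta_sigmaZ_norm {K : ℕ}
    (S : Matrix (Fin K) (Fin K) ℝ) (hS : S.PosDef)
    (α0 α1 : Fin K → ℝ)
    (π0 π1 : ℝ) (hπ0 : 0 < π0) (hπ1 : 0 < π1) (hsum : π0 + π1 = 1)
    (SigmaZ : Matrix (Fin K) (Fin K) ℝ)
    (hSigmaZ : SigmaZ = S + (π0 * π1) • vecMulVec (α1 - α0) (α1 - α0))
    (β : Fin K → ℝ)
    (hβ : β = (π0 * π1) • (SigmaZ⁻¹ *ᵥ (α1 - α0))) :
    β ⬝ᵥ (SigmaZ *ᵥ β)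
        = (π0 * π1) ^ 2 * ((α1 - α0) ⬝ᵥ (SigmaZ⁻¹ *ᵥ (α1 - α0))) ∧
      β ⬝ᵥ (SigmaZ *ᵥ β) ≤ π0 * π1 ∧ π0 * π1 ≤ 1 / 4 := by
  have hc : 0 ≤ π0 * π1 := by positivity
  have hdet : IsUnit SigmaZ.det :=
    (hSigmaZ ▸ hS.add_smul_vecMulVec_self hc (α1 - α0)).det_pos.ne'.isUnit
  have hu : SigmaZ *ᵥ (SigmaZ⁻¹ *ᵥ (α1 - α0)) = α1 - α0 := by
    rw [mulVec_mulVec, mul_nonsing_inv _ hdet, one_mulVec]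
  have hquad : β ⬝ᵥ (SigmaZ *ᵥ β)
      = (π0 * π1) ^ 2 * ((α1 - α0) ⬝ᵥ (SigmaZ⁻¹ *ᵥ (α1 - α0))) :=
    hβ ▸ smul_dotProduct_mulVec_smul_of_mulVec_eq hu _
  have hle := hS.posSemidef.mul_dotProduct_le_one_of_add_smul_vecMulVec_mulVec_eq hc
    (u := SigmaZ⁻¹ *ᵥ (α1 - α0)) (by rw [← hSigmaZ]; exact hu)
  refine ⟨hquad, ?_, by nlinarith [sq_nonneg (π0 - π1)]⟩
  calc β ⬝ᵥ (SigmaZ *ᵥ β)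
      = π0 * π1 * (π0 * π1 * ((α1 - α0) ⬝ᵥ (SigmaZ⁻¹ *ᵥ (α1 - α0)))) := by rw [hquad]; ring
    _ ≤ π0 * π1 * 1 := by gcongr
    _ = π0 * π1 := mul_one _
end

section
/- The intercept β_0 admits the closed form β_0 = [1/2 − π_0 + Δ^{-2} log(π_1/π_0)] · (π_0 π_1 Δ²)/(1 + π_0 π_1 Δ²), where Δ² = (α_1 − α_0)^⊤ Σ_{Z|Y}^{-1}(α_1 − α_0). -/
/-!
Because `π₀ α₀ + π₁ α₁ = 0` and `π₀ + π₁ = 1`, both class means are multiples of `d = α₁ - α₀`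
(`α₀ = -π₁ d`, `α₁ = π₀ d`), so `β₀` depends on `β` only through `d ⬝ β`. Applying
`Σ_Z = Σ_{Z|Y} + π₀π₁ d dᵀ` to `Σ_{Z|Y}⁻¹ d` gives `(1 + π₀π₁Δ²) d`, whence
`d ⬝ β = π₀π₁Δ² / (1 + π₀π₁Δ²)` and `1 - d ⬝ β = 1 / (1 + π₀π₁Δ²)`.
-/

open Matrix

theorem add_eq_smul_sub_of_smul_add_smul_eq_zero {R M : Type*} [CommRing R] [AddCommGroup M]
    [Module R M] {p q : R} {a b : M} (hsum : p + q = 1) (hmean : p • a + q • b = 0) :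
    a + b = (p - q) • (b - a) := by
  linear_combination (norm := module) (2 : R) • hmean - hsum • (a + b)

namespace Matrix

variable {n K : Type*} [Fintype n] [DecidableEq n] [Field K]

theorem inv_add_smul_vecMulVec_mulVec {S : Matrix n n K} (hS : IsUnit S) (t : K) (u w : n → K)
    (hM : IsUnit (S + t • vecMulVec u w)) (hc : 1 + t * (w ⬝ᵥ S⁻¹ *ᵥ u) ≠ 0) :
    (S + t • vecMulVec u w)⁻¹ *ᵥ u = (1 + t * (w ⬝ᵥ S⁻¹ *ᵥ u))⁻¹ • S⁻¹ *ᵥ u := by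
  set M := S + t • vecMulVec u w
  set c := 1 + t * (w ⬝ᵥ S⁻¹ *ᵥ u)
  have hMx : M *ᵥ (S⁻¹ *ᵥ u) = c • u := by
    rw [add_mulVec, mulVec_mulVec, mul_nonsing_inv S ((isUnit_iff_isUnit_det S).mp hS),
      one_mulVec, smul_mulVec, vecMulVec_mulVec]
    simp only [op_smul_eq_smul, smul_smul, c, add_smul, one_smul]
  rw [eq_inv_smul_iff₀ hc, ← mulVec_smul, ← hMx, mulVec_mulVec,
    nonsing_inv_mul M ((isUnit_iff_isUnit_det M).mp hM), one_mulVec]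

end Matrix

/-- The intercept `β_0` admits the closed form
`β_0 = [1/2 - π_0 + Δ⁻² log(π_1/π_0)] ⬝ (π_0π_1Δ²)/(1+π_0π_1Δ²)`,
where `Δ² = (α_1-α_0)ᵀ Σ_{Z|Y}⁻¹ (α_1-α_0)`. -/
theorem intercept_closed_form {K : ℕ}
    (S : Matrix (Fin K) (Fin K) ℝ) (hS : S.PosDef)
    (α0 α1 : Fin K → ℝ) (hne : α0 ≠ α1)
    (π0 π1 : ℝ) (hπ0 : 0 < π0) (hπ1 : 0 < π1) (hsum : π0 + π1 = 1)
    (hmean : π0 • α0 + π1 • α1 = 0)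
    (SigmaZ : Matrix (Fin K) (Fin K) ℝ)
    (hSigmaZ : SigmaZ = S + (π0 * π1) • vecMulVec (α1 - α0) (α1 - α0))
    (Δ2 : ℝ) (hΔ2 : Δ2 = (α1 - α0) ⬝ᵥ (S⁻¹ *ᵥ (α1 - α0)))
    (β : Fin K → ℝ)
    (hβ : β = (π0 * π1) • (SigmaZ⁻¹ *ᵥ (α1 - α0)))
    (β0 : ℝ)
    (hβ0 : β0 = -(1/2) * ((α0 + α1) ⬝ᵥ β)
      + (1 - (α1 - α0) ⬝ᵥ β) * (π0 * π1) * Real.log (π1 / π0)) :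
    β0 = (1/2 - π0 + Δ2⁻¹ * Real.log (π1 / π0))
      * (π0 * π1 * Δ2) / (1 + π0 * π1 * Δ2) := by
  set d := α1 - α0
  have hΔ2_pos : 0 < Δ2 := by
    have h := hS.inv.dotProduct_mulVec_pos (x := d) (sub_ne_zero.mpr hne.symm)
    rwa [star_trivial, ← hΔ2] at h
  have hc : 1 + π0 * π1 * Δ2 ≠ 0 := by positivity
  have hSigmaZ_posDef : SigmaZ.PosDef := by
    simpa [hSigmaZ] using
      hS.add_posSemidef ((posSemidef_vecMulVec_self_star d).smul (by positivity : 0 ≤ π0 * π1))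
  have hSigmaZ_inv : SigmaZ⁻¹ *ᵥ d = (1 + π0 * π1 * Δ2)⁻¹ • S⁻¹ *ᵥ d := by
    subst hSigmaZ hΔ2
    exact inv_add_smul_vecMulVec_mulVec hS.isUnit _ d d hSigmaZ_posDef.isUnit hc
  have hdβ : d ⬝ᵥ β = π0 * π1 * Δ2 / (1 + π0 * π1 * Δ2) := by
    rw [hβ, hSigmaZ_inv, dotProduct_smul, dotProduct_smul, ← hΔ2, smul_eq_mul, smul_eq_mul]
    field_simp
  have hsβ : (α0 + α1) ⬝ᵥ β = (π0 - π1) * (d ⬝ᵥ β) := by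
    rw [add_eq_smul_sub_of_smul_add_smul_eq_zero hsum hmean, smul_dotProduct, smul_eq_mul]
  rw [hβ0, hsβ, hdβ]
  field_simp
  linear_combination Δ2 * hsum
end

section
/- The intercept β_0 satisfies sign(β_0) = sign(1/2 − π_0) and |β_0| ≤ |1/2 − π_0|. Equivalently: if π_0 < 1/2 then 0 < β_0 < 1/2 − π_0; if π_0 = 1/2 then β_0 = 0; if π_0 > 1/2 then 1/2 − π_0 < β_0 < 0. -/
private lemma log_lt_half_sub (x : ℝ) (hx : 1 < x) :
    Real.log x < (x - x⁻¹) / 2 := by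
  have hmono : StrictMonoOn (fun x : ℝ => (x - x⁻¹) / 2 - Real.log x) (Set.Ici 1) := by
    apply strictMonoOn_of_deriv_pos (convex_Ici 1)
    · have hne : ∀ x ∈ Set.Ici (1:ℝ), x ≠ 0 := fun x hx =>
        ne_of_gt (lt_of_lt_of_le one_pos hx)
      exact ((continuousOn_id.sub (continuousOn_id.inv₀ hne)).div_const 2).sub
        (Real.continuousOn_log.mono hne)
    · intro y hy
      rw [interior_Ici] at hy
      have hy1 : (1:ℝ) < y := hy
      have hy0 : (0:ℝ) < y := lt_trans one_pos hy1
      have hne : y ≠ 0 := ne_of_gt hy0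
      have hd : HasDerivAt (fun x : ℝ => (x - x⁻¹) / 2 - Real.log x)
          ((1 - -(y^2)⁻¹) / 2 - y⁻¹) y :=
        (((hasDerivAt_id y).sub (hasDerivAt_inv hne)).div_const 2).sub
          (Real.hasDerivAt_log hne)
      rw [hd.deriv]
      have heq : (1 - -(y^2)⁻¹) / 2 - y⁻¹ = (1 - y⁻¹)^2 / 2 := by
        field_simp; ring
      have hu : y⁻¹ < 1 := inv_lt_one_of_one_lt₀ hy1
      have h2 : (0:ℝ) < (1 - y⁻¹)^2 := pow_pos (by linarith) 2
      linarith
  have := hmono (Set.self_mem_Ici) (le_of_lt hx : (1:ℝ) ≤ x) hx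
  simp at this
  linarith

private lemma key_ineq (p : ℝ) (hp0 : 0 < p) (hp : p < 1/2) :
    p * (1 - p) * Real.log ((1 - p) / p) < 1/2 - p := by
  have h1p : 0 < 1 - p := by linarith
  have hx : 1 < (1 - p) / p := (one_lt_div hp0).mpr (by linarith)
  have hlog := log_lt_half_sub _ hx
  have hmul : p * (1 - p) * Real.log ((1 - p) / p)
      < p * (1 - p) * (((1 - p) / p - ((1 - p) / p)⁻¹) / 2) := by
    exact mul_lt_mul_of_pos_left hlog (by positivity)
  have heq : p * (1 - p) * (((1 - p) / p - ((1 - p) / p)⁻¹) / 2) = 1/2 - p := by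
    rw [inv_div]
    field_simp
    ring
  linarith

/-- The intercept `β_0` satisfies `sign(β_0) = sign(1/2 - π_0)`
and `|β_0| ≤ |1/2 - π_0|`: if `π_0 < 1/2` then `0 < β_0 < 1/2 - π_0`;
if `π_0 = 1/2` then `β_0 = 0`; if `π_0 > 1/2` then `1/2 - π_0 < β_0 < 0`. -/
theorem intercept_sign_and_size (π0 π1 Δ β0 : ℝ)
    (h0 : 0 < π0) (h1 : π0 < 1) (hπ1 : π1 = 1 - π0) (hΔ : 0 < Δ)
    (hβ0 : β0 = (1/2 - π0 + (Δ^2)⁻¹ * Real.log (π1 / π0))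
      * (π0 * π1 * Δ^2) / (1 + π0 * π1 * Δ^2)) :
    (π0 < 1/2 → 0 < β0 ∧ β0 < 1/2 - π0) ∧
      (π0 = 1/2 → β0 = 0) ∧
      (1/2 < π0 → 1/2 - π0 < β0 ∧ β0 < 0) := by
  subst hπ1
  have hΔ2 : (0:ℝ) < Δ^2 := by positivity
  have h1π0 : 0 < 1 - π0 := by linarith
  have ht : 0 < π0 * (1 - π0) * Δ^2 := by positivity
  have ht1 : 0 < 1 + π0 * (1 - π0) * Δ^2 := by linarith
  refine ⟨?_, ?_, ?_⟩
  · intro hlt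
    have hL : 0 < Real.log ((1 - π0) / π0) :=
      Real.log_pos ((one_lt_div h0).mpr (by linarith))
    have hkey := key_ineq π0 h0 hlt
    constructor
    · rw [hβ0]
      have : 0 < 1/2 - π0 + (Δ^2)⁻¹ * Real.log ((1 - π0) / π0) := by
        have : 0 < (Δ^2)⁻¹ * Real.log ((1 - π0) / π0) := by positivity
        linarith
      positivity
    · rw [hβ0, div_lt_iff₀ ht1]
      have hΔne : Δ^2 ≠ 0 := ne_of_gt hΔ2
      have h2 : (Δ^2)⁻¹ * Real.log ((1 - π0) / π0) * (π0 * (1 - π0) * Δ^2)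
          = π0 * (1 - π0) * Real.log ((1 - π0) / π0) := by
        field_simp
      nlinarith [hkey, ht]
  · intro heq
    subst heq
    norm_num [hβ0]
  · intro hgt
    have hπ1lt : 1 - π0 < 1/2 := by linarith
    have hkey := key_ineq (1 - π0) h1π0 hπ1lt
    have hL : Real.log ((1 - π0) / π0) < 0 :=
      Real.log_neg (by positivity) ((div_lt_one h0).mpr (by linarith))
    -- rewrite hkey: (1-π0)*π0*log(π0/(1-π0)) < 1/2-(1-π0) = π0-1/2
    have hlogswap : Real.log ((1 - (1 - π0)) / (1 - π0)) = - Real.log ((1 - π0) / π0) := by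
      rw [← Real.log_inv, inv_div]
      norm_num
    rw [hlogswap] at hkey
    have hkey' : 1/2 - π0 < π0 * (1 - π0) * Real.log ((1 - π0) / π0) := by nlinarith
    constructor
    · rw [hβ0, lt_div_iff₀ ht1]
      have h2 : (Δ^2)⁻¹ * Real.log ((1 - π0) / π0) * (π0 * (1 - π0) * Δ^2)
          = π0 * (1 - π0) * Real.log ((1 - π0) / π0) := by
        field_simp
      nlinarith [hkey', ht]
    · rw [hβ0, div_neg_iff]
      right
      refine ⟨?_, ht1⟩
      have hu : (Δ^2)⁻¹ * Real.log ((1 - π0) / π0) < 0 :=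
        mul_neg_of_pos_of_neg (by positivity) hL
      have hnum : 1/2 - π0 + (Δ^2)⁻¹ * Real.log ((1 - π0) / π0) < 0 := by linarith
      exact mul_neg_of_neg_of_pos hnum ht
end

section
/- For all π_0 ∈ (0, 1/2), with π_1 = 1 − π_0, one has 1/2 − π_0 − π_0 π_1 log(π_1/π_0) > 0. -/
lemma log_lt_key {t : ℝ} (ht : 1 < t) : Real.log t < (t - t⁻¹) / 2 := by
  have key : StrictMonoOn (fun x : ℝ => (x - x⁻¹) / 2 - Real.log x) (Set.Ici 1) := by
    apply strictMonoOn_of_deriv_pos (convex_Ici 1)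
    · apply ContinuousOn.sub
      · exact (continuousOn_id.sub (continuousOn_inv₀.mono (by
          intro x hx
          simp only [Set.mem_Ici] at hx
          simp only [Set.mem_compl_iff, Set.mem_singleton_iff]
          linarith))).div_const 2
      · exact Real.continuousOn_log.mono (by
          intro x hx
          simp only [Set.mem_Ici] at hx
          simp only [Set.mem_compl_iff, Set.mem_singleton_iff]
          linarith)
    · intro x hx
      rw [interior_Ici] at hx
      have hx1 : (1:ℝ) < x := hx
      have hx0 : x ≠ 0 := by linarith
      have hd : HasDerivAt (fun x : ℝ => (x - x⁻¹) / 2 - Real.log x)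
          ((1 - -(x ^ 2)⁻¹) / 2 - x⁻¹) x :=
        (((hasDerivAt_id x).sub (hasDerivAt_inv hx0)).div_const 2).sub
          (Real.hasDerivAt_log hx0)
      rw [hd.deriv]
      have heq : (1 - -(x ^ 2)⁻¹) / 2 - x⁻¹ = (x - 1) ^ 2 / (2 * x ^ 2) := by
        field_simp; ring
      rw [heq]
      have h1 : (0:ℝ) < (x - 1) ^ 2 := pow_pos (by linarith) 2
      exact div_pos h1 (by positivity)
  have h := key (Set.self_mem_Ici) (Set.mem_Ici.mpr ht.le) ht
  simp at h
  linarith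

/-- For all `π_0 ∈ (0, 1/2)`, with `π_1 = 1 - π_0`, one has
`1/2 - π_0 - π_0 π_1 log(π_1/π_0) > 0`. -/
theorem key_scalar_inequality :
    ∀ p : ℝ, 0 < p → p < 1/2 →
      0 < 1/2 - p - p * (1 - p) * Real.log ((1 - p) / p) := by
  intro p hp hp2
  have hq : 0 < 1 - p := by linarith
  have ht : 1 < (1 - p) / p := by
    rw [lt_div_iff₀ hp]; linarith
  have h := log_lt_key ht
  have hinv : ((1 - p) / p)⁻¹ = p / (1 - p) := by
    rw [inv_div]
  rw [hinv] at h
  have hmul : p * (1 - p) * Real.log ((1 - p) / p)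
      < p * (1 - p) * (((1 - p) / p - p / (1 - p)) / 2) := by
    apply mul_lt_mul_of_pos_left h (by positivity)
  have heq : p * (1 - p) * (((1 - p) / p - p / (1 - p)) / 2) = 1/2 - p := by
    field_simp; ring
  linarith [hmul, heq ▸ hmul]
end

section
/- Suppose the design matrix X ∈ ℝ^{n×p} and labels y ∈ {0,1}^n satisfy X θ̂ = y for θ̂ = X^+ y, and each class is nonempty. Define n̂_k = #{i : y_i = k}, π̂_k = n̂_k/n, μ̂_k = n̂_k^{-1} Σ_{i: y_i=k} X_i for k ∈ {0,1}, and β̂_0 = −(1/2)(μ̂_0 + μ̂_1)^⊤ θ̂ + [1 − (μ̂_1 − μ̂_0)^⊤ θ̂] π̂_0 π̂_1 log(π̂_1/π̂_0). Then β̂_0 = −1/2 regardless of the data. -/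
open Matrix Finset

/-! Under interpolation `X θ̂ = y`, the mean of the rows of class `k` has inner product `k`
with `θ̂`. Hence `(μ̂₀ + μ̂₁)ᵀθ̂ = (μ̂₁ - μ̂₀)ᵀθ̂ = 1`, the logarithmic term is multiplied by `0`,
and `β̂₀ = -1/2`. -/

theorem Matrix.sum_rows_div_dotProduct {R m k : Type*} [Field R] [Fintype k]
    (X : Matrix m k R) (s : Finset m) (c : R) (θ : k → R) :
    (fun j => (∑ i ∈ s, X i j) / c) ⬝ᵥ θ = (∑ i ∈ s, (X *ᵥ θ) i) / c := by
  simp only [dotProduct, mulVec, div_mul_eq_mul_div, ← sum_div, sum_mul]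
  rw [sum_comm]

theorem Matrix.levelSetMean_dotProduct_of_mulVec_eq {R m k : Type*} [Field R] [Fintype m]
    [Fintype k] [DecidableEq R] {X : Matrix m k R} {θ : k → R} {y : m → R}
    (hinterp : X *ᵥ θ = y) (a c : R) :
    (fun j => (∑ i ∈ univ.filter (fun i => y i = a), X i j) / c) ⬝ᵥ θ
      = #(univ.filter (fun i => y i = a)) * a / c := by
  rw [sum_rows_div_dotProduct, hinterp, sum_congr rfl fun i hi => (mem_filter.mp hi).2,
    sum_const, nsmul_eq_mul]

theorem naive_intercept_is_minus_half_general {n p : ℕ}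
    (X : Matrix (Fin n) (Fin p) ℝ) (y : Fin n → ℝ) (θ : Fin p → ℝ)
    (hinterp : X *ᵥ θ = y)
    (n0 n1 : ℕ)
    (hn1 : n1 = (univ.filter (fun i => y i = 1)).card)
    (hpos1 : 0 < n1)
    (π0 π1 : ℝ)
    (μ0 μ1 : Fin p → ℝ)
    (hμ0 : μ0 = fun j => (∑ i ∈ univ.filter (fun i => y i = 0), X i j) / n0)
    (hμ1 : μ1 = fun j => (∑ i ∈ univ.filter (fun i => y i = 1), X i j) / n1)
    (β0hat : ℝ)
    (hβ0hat : β0hat = -(1/2) * ((μ0 + μ1) ⬝ᵥ θ)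
      + (1 - (μ1 - μ0) ⬝ᵥ θ) * (π0 * π1) * Real.log (π1 / π0)) :
    β0hat = -(1/2) := by
  have hμ0θ : μ0 ⬝ᵥ θ = 0 := by
    rw [hμ0, levelSetMean_dotProduct_of_mulVec_eq hinterp, mul_zero, zero_div]
  have hμ1θ : μ1 ⬝ᵥ θ = 1 := by
    rw [hμ1, levelSetMean_dotProduct_of_mulVec_eq hinterp, ← hn1, mul_one,
      div_self (Nat.cast_ne_zero.mpr hpos1.ne')]
  rw [hβ0hat, add_dotProduct, sub_dotProduct, hμ0θ, hμ1θ]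
  ring

/-- If `X θ̂ = y` with labels `y ∈ {0,1}ⁿ` and both classes
nonempty, then the naive plug-in intercept estimate
`β̂_0 = -(1/2)(μ̂_0+μ̂_1)ᵀθ̂ + [1 - (μ̂_1-μ̂_0)ᵀθ̂] π̂_0 π̂_1 log(π̂_1/π̂_0)`
always equals `-1/2`. -/
theorem naive_intercept_is_minus_half {n p : ℕ}
    (X : Matrix (Fin n) (Fin p) ℝ) (y : Fin n → ℝ) (θ : Fin p → ℝ)
    (hy : ∀ i, y i = 0 ∨ y i = 1)
    (hinterp : X *ᵥ θ = y)
    (n0 n1 : ℕ)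
    (hn0 : n0 = (univ.filter (fun i => y i = 0)).card)
    (hn1 : n1 = (univ.filter (fun i => y i = 1)).card)
    (hpos0 : 0 < n0) (hpos1 : 0 < n1)
    (π0 π1 : ℝ) (hπ0 : π0 = (n0 : ℝ) / n) (hπ1 : π1 = (n1 : ℝ) / n)
    (μ0 μ1 : Fin p → ℝ)
    (hμ0 : μ0 = fun j => (∑ i ∈ univ.filter (fun i => y i = 0), X i j) / n0)
    (hμ1 : μ1 = fun j => (∑ i ∈ univ.filter (fun i => y i = 1), X i j) / n1)
    (β0hat : ℝ)
    (hβ0hat : β0hat = -(1/2) * ((μ0 + μ1) ⬝ᵥ θ)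
      + (1 - (μ1 - μ0) ⬝ᵥ θ) * (π0 * π1) * Real.log (π1 / π0)) :
    β0hat = -(1/2) :=
  naive_intercept_is_minus_half_general X y θ hinterp n0 n1 hn1 hpos1 π0 π1 μ0 μ1 hμ0 hμ1 β0hat
    hβ0hat
end
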